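/- arXiv:2412.09792 — 2 statements merged into one kernel-verified Lean document; each statement's English description precedes it below -/
import Mathlib

section
/- Let X_1, …, X_H be independent, identically distributed random variables, each supported on (0, 1) with density x ↦ α x^{α−1} for some α > 0 (the Beta(α, 1) distribution). Then for every ε ∈ (0, 1), P(∏_{h=1}^H X_h > ε) ≤ (α log(1/ε))^H / H!. -/
/-!
The Beta(α, 1) density `α x ^ (α - 1)` is at most `α / x` on `(0, 1)`, so it suffices to bound the
product measure of `{x | ε < ∏ i, x i}` when every factor is dominated by `α dx / x` on `(0, 1]`.
Integrating out the first coordinate (Fubini) and inducting on the number of factors reduces this to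
`∫ a in ε..1, α / a * (α * log (a / ε)) ^ n / n! = (α * log (1 / ε)) ^ (n + 1) / (n + 1)!`.
-/

open MeasureTheory ProbabilityTheory Real Set
open scoped Nat

noncomputable def reciprocalMeasure (α : ℝ) : Measure ℝ :=
  (volume.restrict (Ioc 0 1)).withDensity fun x => ENNReal.ofReal (α / x)

lemma ae_mem_Ioc_of_le_reciprocalMeasure {α : ℝ} {ν : Measure ℝ} (hν : ν ≤ reciprocalMeasure α) :
    ∀ᵐ x ∂ν, x ∈ Ioc (0 : ℝ) 1 :=
  (Measure.absolutelyContinuous_of_le hν).trans (withDensity_absolutelyContinuous _ _)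
    |>.ae_le (ae_restrict_mem measurableSet_Ioc)

lemma ae_prod_mem_Icc {ι : Type*} [Fintype ι] {ν : ι → Measure ℝ} [∀ i, SigmaFinite (ν i)]
    (hν : ∀ i, ∀ᵐ x ∂ν i, x ∈ Icc (0 : ℝ) 1) :
    ∀ᵐ y ∂Measure.pi ν, ∏ i, y i ∈ Icc (0 : ℝ) 1 := by
  have h : ∀ᵐ y ∂Measure.pi ν, ∀ i, y i ∈ Icc (0 : ℝ) 1 :=
    ae_all_iff.2 fun i => Measure.tendsto_eval_ae_ae.eventually (hν i)
  filter_upwards [h] with y hy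
  exact ⟨Finset.prod_nonneg fun i _ => (hy i).1,
    Finset.prod_le_one (fun i _ => (hy i).1) fun i _ => (hy i).2⟩

lemma pi_setOf_lt_prod_eq_lintegral {n : ℕ} (ν : Fin (n + 1) → Measure ℝ)
    [∀ i, SigmaFinite (ν i)] (c : ℝ) :
    Measure.pi ν {x | c < ∏ i, x i} =
      ∫⁻ a, Measure.pi (fun i : Fin n => ν i.succ) {y | c < a * ∏ i, y i} ∂ν 0 := by
  have hT : MeasurableSet {p : ℝ × (Fin n → ℝ) | c < p.1 * ∏ i, p.2 i} :=
    measurableSet_lt measurable_const (by fun_prop)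
  have hS : {x : Fin (n + 1) → ℝ | c < ∏ i, x i} =
      MeasurableEquiv.piFinSuccAbove (fun _ => ℝ) 0 ⁻¹'
        {p : ℝ × (Fin n → ℝ) | c < p.1 * ∏ i, p.2 i} := by
    ext x
    simp [Fin.prod_univ_succ, MeasurableEquiv.piFinSuccAbove, Fin.tail]
  rw [hS, (measurePreserving_piFinSuccAbove ν 0).measure_preimage hT.nullMeasurableSet,
    Measure.prod_apply hT]
  rfl

lemma continuousOn_div_mul_log_pow (α : ℝ) {ε : ℝ} (hε : 0 < ε) (n : ℕ) :
    ContinuousOn (fun a => α / a * ((α * log (a / ε)) ^ n / n !)) (Ici ε) := by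
  have h0 : ∀ a ∈ Ici ε, a ≠ 0 := fun a ha => (hε.trans_le ha).ne'
  exact (continuousOn_const.div continuousOn_id h0).mul
    ((((continuousOn_id.div_const ε).log fun a ha => div_ne_zero (h0 a ha) hε.ne').const_smul
      α).pow n |>.div_const _)

lemma integral_div_mul_log_pow (α : ℝ) {ε : ℝ} (hε : 0 < ε) (hε1 : ε ≤ 1) (n : ℕ) :
    ∫ a in ε..1, α / a * ((α * log (a / ε)) ^ n / n !) =
      (α * log (1 / ε)) ^ (n + 1) / (n + 1)! := by
  have hderiv : ∀ a ∈ uIcc ε 1, HasDerivAt (fun a => (α * log (a / ε)) ^ (n + 1) / (n + 1)!)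
      (α / a * ((α * log (a / ε)) ^ n / n !)) a := by
    intro a ha
    rw [uIcc_of_le hε1] at ha
    have ha0 : a ≠ 0 := (hε.trans_le ha.1).ne'
    have hlog : HasDerivAt (fun a => α * log (a / ε)) (α / a) a := by
      simpa [div_eq_mul_inv, mul_comm, mul_left_comm, ha0, hε.ne'] using
        ((hasDerivAt_id a).div_const ε).log (div_ne_zero ha0 hε.ne') |>.const_mul α
    refine ((hlog.pow (n + 1)).div_const ((n + 1)! : ℝ)).congr_deriv ?_
    rw [Nat.factorial_succ]
    push_cast
    field_simp
  have hcont := (continuousOn_div_mul_log_pow α hε n).mono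
    (uIcc_of_le hε1 ▸ Icc_subset_Ici_self : uIcc ε 1 ⊆ Ici ε)
  rw [intervalIntegral.integral_eq_sub_of_hasDerivAt hderiv hcont.intervalIntegrable]
  simp [div_self hε.ne']

lemma lintegral_reciprocalMeasure_indicator_log_pow {α ε : ℝ} (hα : 0 ≤ α) (hε : 0 < ε)
    (hε1 : ε ≤ 1) (n : ℕ) :
    ∫⁻ a, (Ioi ε).indicator (fun a => ENNReal.ofReal ((α * log (a / ε)) ^ n / n !)) a
        ∂reciprocalMeasure α =
      ENNReal.ofReal ((α * log (1 / ε)) ^ (n + 1) / (n + 1)!) := by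
  have hf := (continuousOn_div_mul_log_pow α hε n).mono (Icc_subset_Ici_self : Icc ε 1 ⊆ Ici ε)
  have hf_nonneg : ∀ a ∈ Ioc ε 1, 0 ≤ α / a * ((α * log (a / ε)) ^ n / n !) := fun a ha => by
    have ha0 : 0 < a := hε.trans ha.1
    have : 0 ≤ log (a / ε) := log_nonneg ((one_le_div hε).2 ha.1.le)
    positivity
  rw [reciprocalMeasure, lintegral_withDensity_eq_lintegral_mul _ (by fun_prop) (by measurability)]
  have hmul : ∀ a, (fun a => ENNReal.ofReal (α / a)) a *
      (Ioi ε).indicator (fun a => ENNReal.ofReal ((α * log (a / ε)) ^ n / n !)) a =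
      (Ioi ε).indicator (fun a => ENNReal.ofReal (α / a * ((α * log (a / ε)) ^ n / n !))) a := by
    intro a
    by_cases ha : a ∈ Ioi ε
    · simp only [indicator_of_mem ha]
      exact (ENNReal.ofReal_mul (div_nonneg hα (hε.trans ha).le)).symm
    · simp [indicator_of_notMem ha]
  simp only [Pi.mul_apply, hmul]
  rw [setLIntegral_indicator measurableSet_Ioi, inter_comm, Ioc_inter_Ioi, max_eq_right hε.le,
    ← ofReal_integral_eq_lintegral_ofReal ((hf.integrableOn_Icc).mono_set Ioc_subset_Icc_self)
      ((ae_restrict_iff' measurableSet_Ioc).2 (.of_forall hf_nonneg)),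
    ← intervalIntegral.integral_of_le hε1, integral_div_mul_log_pow α hε hε1]

lemma withDensity_beta_le_reciprocalMeasure {α : ℝ} (hα : 0 ≤ α) :
    volume.withDensity (fun x =>
        ENNReal.ofReal (if x ∈ Ioo (0 : ℝ) 1 then α * x ^ (α - 1) else 0)) ≤
      reciprocalMeasure α := by
  rw [reciprocalMeasure, ← withDensity_indicator measurableSet_Ioc]
  refine withDensity_mono (.of_forall fun x => ?_)
  dsimp only
  split_ifs with hx
  · rw [indicator_of_mem (Ioo_subset_Ioc_self hx)]
    refine ENNReal.ofReal_le_ofReal ?_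
    rw [rpow_sub_one hx.1.ne', mul_div_assoc']
    exact div_le_div_of_nonneg_right
      (mul_le_of_le_one_right hα (rpow_le_one hx.1.le hx.2.le hα)) hx.1.le
  · simp

theorem pi_setOf_lt_prod_le {α : ℝ} (hα : 0 ≤ α) {n : ℕ} (ν : Fin n → Measure ℝ)
    [∀ i, SigmaFinite (ν i)] (hν : ∀ i, ν i ≤ reciprocalMeasure α) {ε : ℝ} (hε : 0 < ε)
    (hε1 : ε < 1) :
    Measure.pi ν {x | ε < ∏ i, x i} ≤ ENNReal.ofReal ((α * log (1 / ε)) ^ n / n !) := by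
  induction n generalizing ε with
  | zero =>
    rw [Measure.pi_of_empty]
    exact prob_le_one.trans_eq (by simp)
  | succ n ih =>
    have hnull : ∀ a ≤ ε, Measure.pi (fun i : Fin n => ν i.succ) {y | ε < a * ∏ i, y i} = 0 := by
      intro a ha
      have hprod := ae_prod_mem_Icc fun i : Fin n => (ae_mem_Ioc_of_le_reciprocalMeasure
        (hν i.succ)).mono fun x hx => Ioc_subset_Icc_self hx
      refine measure_eq_zero_iff_ae_notMem.2 (hprod.mono fun y hy hlt => ?_)
      rcases le_or_gt a 0 with ha0 | ha0
      · linarith [mul_nonpos_of_nonpos_of_nonneg ha0 hy.1, hlt.out]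
      · linarith [mul_le_of_le_one_right ha0.le hy.2, hlt.out]
    calc Measure.pi ν {x | ε < ∏ i, x i}
        = ∫⁻ a, Measure.pi (fun i : Fin n => ν i.succ) {y | ε < a * ∏ i, y i} ∂ν 0 :=
          pi_setOf_lt_prod_eq_lintegral ν ε
      _ ≤ ∫⁻ a, (Ioi ε).indicator
            (fun a => ENNReal.ofReal ((α * log (a / ε)) ^ n / n !)) a ∂ν 0 := by
          refine lintegral_mono fun a => ?_
          by_cases ha : a ∈ Ioi ε
          · have ha0 : 0 < a := hε.trans ha
            rw [indicator_of_mem ha, ← one_div_div ε a]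
            convert ih (fun i => ν i.succ) (fun i => hν _) (div_pos hε ha0)
              ((div_lt_one ha0).2 ha) using 2
            simp [div_lt_iff₀' ha0]
          · rw [indicator_of_notMem ha, hnull a (not_lt.1 ha)]
      _ ≤ ∫⁻ a, (Ioi ε).indicator
            (fun a => ENNReal.ofReal ((α * log (a / ε)) ^ n / n !)) a ∂reciprocalMeasure α :=
          lintegral_mono' (hν 0) le_rfl
      _ = ENNReal.ofReal ((α * log (1 / ε)) ^ (n + 1) / (n + 1)!) :=
          lintegral_reciprocalMeasure_indicator_log_pow hα hε hε1.le n

theorem prod_iid_beta_tail_general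
    {Ω : Type*} [MeasurableSpace Ω] (μ : Measure Ω) [IsProbabilityMeasure μ]
    (H : ℕ) (α : ℝ) (hα : 0 < α)
    (X : Fin H → Ω → ℝ) (hmeas : ∀ h, Measurable (X h))
    (hlaw : ∀ h, Measure.map (X h) μ =
      volume.withDensity (fun x =>
        ENNReal.ofReal (if x ∈ Set.Ioo (0 : ℝ) 1 then α * x ^ (α - 1) else 0)))
    (hindep : iIndepFun X μ)
    (ε : ℝ) (hε : 0 < ε) (hε1 : ε < 1) :
    μ {ω | ε < ∏ h, X h ω} ≤
      ENNReal.ofReal ((α * Real.log (1 / ε)) ^ H / (Nat.factorial H)) := by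
  have hS : MeasurableSet {x : Fin H → ℝ | ε < ∏ h, x h} :=
    measurableSet_lt measurable_const (by fun_prop)
  calc μ {ω | ε < ∏ h, X h ω}
      = μ.map (fun ω h => X h ω) {x | ε < ∏ h, x h} :=
        (Measure.map_apply (measurable_pi_lambda _ hmeas) hS).symm
    _ = Measure.pi (fun h => μ.map (X h)) {x | ε < ∏ h, x h} := by
        rw [hindep.map_fun_eq_pi_map fun h => (hmeas h).aemeasurable]
    _ ≤ _ := pi_setOf_lt_prod_le hα.le _
        (fun h => (hlaw h).trans_le (withDensity_beta_le_reciprocalMeasure hα.le)) hε hε1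

/-- Tail bound for a product of `H` i.i.d. Beta(α, 1) random variables
(density `α x^(α-1)` on `(0,1)`): `P(∏ X_h > ε) ≤ (α log(1/ε))^H / H!`. -/
theorem prod_iid_beta_tail
    {Ω : Type*} [MeasurableSpace Ω] (μ : Measure Ω) [IsProbabilityMeasure μ]
    (H : ℕ) (hH : 1 ≤ H) (α : ℝ) (hα : 0 < α)
    (X : Fin H → Ω → ℝ) (hmeas : ∀ h, Measurable (X h))
    (hsupp : ∀ h, ∀ᵐ ω ∂μ, X h ω ∈ Set.Ioo (0 : ℝ) 1)
    (hlaw : ∀ h, Measure.map (X h) μ =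
      volume.withDensity (fun x =>
        ENNReal.ofReal (if x ∈ Set.Ioo (0 : ℝ) 1 then α * x ^ (α - 1) else 0)))
    (hindep : iIndepFun X μ)
    (ε : ℝ) (hε : 0 < ε) (hε1 : ε < 1) :
    μ {ω | ε < ∏ h, X h ω} ≤
      ENNReal.ofReal ((α * Real.log (1 / ε)) ^ H / (Nat.factorial H)) :=
  prod_iid_beta_tail_general μ H α hα X hmeas hlaw hindep ε hε hε1
end

section
/- Let L ≥ 1, let μ_1, μ_2 ∈ ℝ^L, and let Σ be a symmetric positive definite L×L real matrix. Writing φ_Σ(y) = (2π)^{−L/2} det(Σ)^{−1/2} exp(−yᵀ Σ^{−1} y / 2) for the centered L-variate normal density with covariance Σ, one has ∫_{ℝ^L} |φ_Σ(y − μ_1) − φ_Σ(y − μ_2)| dy ≤ √(2/π) · ((μ_1 − μ_2)ᵀ Σ^{−1} (μ_1 − μ_2))^{1/2}. -/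
/-!
Write `δ = μ₁ - μ₂` and `d = (δᵀ Σ⁻¹ δ)^{1/2}`. Factor `Σ⁻¹ = Aᵀ A` and complete `A δ / d` to an
orthonormal basis; this gives `B` with `Bᵀ Σ⁻¹ B = 1` and `B (d eᵢ) = δ`. In the coordinates
`y = B z + μ₁` the two densities become products of standard normal densities that differ only in
the `i`-th factor, shifted by `d`, and the Jacobian `|det B| = √(det Σ)` cancels the normalization.
Integrating out the other coordinates leaves `∫ |φ(t) - φ(t + d)| dt`; as `φ` decreases in `|t|`,
this equals `2 ∫_{-d/2}^{d/2} φ ≤ 2 d φ(0) = √(2/π) d`.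
-/

open MeasureTheory Real Matrix Set ProbabilityTheory

theorem setIntegral_comp_add_right {E : Type*} [NormedAddCommGroup E] [NormedSpace ℝ E]
    (f : ℝ → E) (s : Set ℝ) (d : ℝ) :
    ∫ t in s, f (t + d) = ∫ t in (· + d) '' s, f t :=
  ((measurePreserving_add_right volume d).setIntegral_image_emb
    (measurableEmbedding_addRight d) f s).symm

theorem integral_abs_sub_comp_add_eq {f : ℝ → ℝ} (hf : Integrable f) {c d : ℝ}
    (hleft : ∀ t ≤ c, f t ≤ f (t + d)) (hright : ∀ t > c, f (t + d) ≤ f t) :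
    ∫ t, |f t - f (t + d)| = 2 * ∫ t in c..c + d, f t := by
  have hfd : Integrable (fun t => f (t + d)) := hf.comp_add_right d
  have hI : Integrable (fun t => |f t - f (t + d)|) := (hf.sub hfd).abs
  have left : ∫ t in Iic c, |f t - f (t + d)| = ∫ t in c..c + d, f t := by
    rw [setIntegral_congr_fun measurableSet_Iic
        fun t ht => (abs_of_nonpos (sub_nonpos.2 (hleft t ht))).trans (neg_sub _ _),
      integral_sub hfd.integrableOn hf.integrableOn, setIntegral_comp_add_right,
      image_add_const_Iic, intervalIntegral.integral_Iic_sub_Iic hf.integrableOn hf.integrableOn]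
  have right : ∫ t in Ioi c, |f t - f (t + d)| = ∫ t in c..c + d, f t := by
    rw [setIntegral_congr_fun measurableSet_Ioi
        fun t ht => abs_of_nonneg (sub_nonneg.2 (hright t ht)),
      integral_sub hf.integrableOn hfd.integrableOn, setIntegral_comp_add_right,
      image_add_const_Ioi, intervalIntegral.integral_Ioi_sub_Ioi' hf.integrableOn hf.integrableOn]
  rw [← intervalIntegral.integral_Iic_add_Ioi hI.integrableOn hI.integrableOn, left, right]
  ring

theorem integral_abs_sub_comp_add_le {f : ℝ → ℝ} (hf : Integrable f)
    (hanti : ∀ s t, |s| ≤ |t| → f t ≤ f s) {d : ℝ} (hd : 0 ≤ d) :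
    ∫ t, |f t - f (t + d)| ≤ 2 * d * f 0 := by
  rw [integral_abs_sub_comp_add_eq hf (c := -(d / 2))
    (fun t ht => hanti _ _ (by rw [abs_le]; constructor <;> cases abs_cases t <;> linarith))
    (fun t ht => hanti _ _ (by rw [abs_le]; constructor <;> cases abs_cases (t + d) <;> linarith))]
  have hbound : ∫ t in -(d / 2)..-(d / 2) + d, f t ≤ ∫ _ in -(d / 2)..-(d / 2) + d, f 0 :=
    intervalIntegral.integral_mono_on (by linarith) hf.intervalIntegrable intervalIntegrable_const
      fun t _ => hanti 0 t (by simp)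
  rw [intervalIntegral.integral_const, smul_eq_mul] at hbound
  linarith

theorem gaussianPDFReal_le_of_abs_sub_le {μ : ℝ} {v : NNReal} {s t : ℝ}
    (h : |s - μ| ≤ |t - μ|) : gaussianPDFReal μ v t ≤ gaussianPDFReal μ v s := by
  simp only [gaussianPDFReal]
  have hsq : (s - μ) ^ 2 ≤ (t - μ) ^ 2 := sq_le_sq.2 h
  gcongr

theorem integral_abs_gaussianPDFReal_sub_le {d : ℝ} (hd : 0 ≤ d) :
    ∫ t, |gaussianPDFReal 0 1 t - gaussianPDFReal 0 1 (t + d)| ≤ √(2 / π) * d := by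
  refine (integral_abs_sub_comp_add_le (integrable_gaussianPDFReal 0 1)
    (fun s t h => gaussianPDFReal_le_of_abs_sub_le (by simpa using h)) hd).trans_eq ?_
  simp only [gaussianPDFReal, NNReal.coe_one, mul_one, sub_zero, ne_eq, OfNat.ofNat_ne_zero,
    not_false_eq_true, zero_pow, neg_zero, zero_div, exp_zero]
  rw [sqrt_div zero_le_two, sqrt_mul zero_le_two]
  field_simp
  rw [sq_sqrt zero_le_two, mul_comm]

theorem dotProduct_mulVec_mulVec_of_transpose_mul_mul_eq_one {m n R : Type*} [Fintype m]
    [Fintype n] [DecidableEq n] [CommSemiring R] {B : Matrix m n R} {T : Matrix m m R}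
    (hB : Bᵀ * T * B = 1) (z : n → R) : B *ᵥ z ⬝ᵥ (T *ᵥ (B *ᵥ z)) = z ⬝ᵥ z := by
  rw [mulVec_mulVec, dotProduct_mulVec, ← vecMul_transpose, vecMul_vecMul, ← Matrix.mul_assoc, hB,
    vecMul_one]

variable {ι : Type*} [Fintype ι] [DecidableEq ι]

theorem det_sq_of_transpose_mul_inv_mul_eq_one {K : Type*} [Field K] {B S : Matrix ι ι K}
    (hB : Bᵀ * S⁻¹ * B = 1) : B.det ^ 2 = S.det := by
  have h := congrArg det hB
  rw [det_mul, det_mul, det_transpose, det_nonsing_inv, det_one] at h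
  by_cases hS : IsUnit S.det
  · rw [Ring.inverse_eq_inv'] at h
    field_simp [hS.ne_zero] at h
    linear_combination h
  · simp [Ring.inverse_non_unit _ hS] at h

theorem exists_orthogonal_mulVec_single (i₀ : ι) {u : ι → ℝ} (hu : u ⬝ᵥ u = 1) :
    ∃ O : Matrix ι ι ℝ, Oᵀ * O = 1 ∧ O *ᵥ Pi.single i₀ 1 = u := by
  have hv : Orthonormal ℝ (({i₀} : Set ι).domRestrict fun _ => WithLp.toLp 2 u) := by
    rw [orthonormal_iff_ite]
    rintro ⟨i, rfl⟩ ⟨j, rfl⟩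
    rw [if_pos rfl, Set.domRestrict_apply, EuclideanSpace.inner_eq_star_dotProduct]
    simpa [dotProduct_comm] using hu
  obtain ⟨b, hb⟩ := hv.exists_orthonormalBasis_extension_of_card_eq (by simp)
  refine ⟨(EuclideanSpace.basisFun ι ℝ).toBasis.toMatrix b, ?_, ?_⟩
  · simpa using (EuclideanSpace.basisFun ι ℝ).toMatrix_orthonormalBasis_conjTranspose_mul_self b
  · ext i
    simp [mulVec_single, Module.Basis.toMatrix_apply, hb i₀ rfl]

open scoped MatrixOrder in
theorem Matrix.PosDef.exists_transpose_mul_mul_eq_one_mulVec_single {T : Matrix ι ι ℝ}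
    (hT : T.PosDef) (i₀ : ι) {δ : ι → ℝ} (hδ : δ ≠ 0) :
    ∃ B : Matrix ι ι ℝ, Bᵀ * T * B = 1 ∧ B *ᵥ Pi.single i₀ √(δ ⬝ᵥ (T *ᵥ δ)) = δ := by
  have hpos : 0 < δ ⬝ᵥ (T *ᵥ δ) := by simpa using hT.re_dotProduct_pos hδ
  obtain ⟨A, rfl⟩ := CStarAlgebra.nonneg_iff_eq_star_mul_self.mp hT.posSemidef.nonneg
  rw [star_eq_conjTranspose, conjTranspose_eq_transpose_of_trivial] at hT hpos ⊢
  set d := √(δ ⬝ᵥ ((Aᵀ * A) *ᵥ δ))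
  have hd : 0 < d := sqrt_pos.2 hpos
  have hA : IsUnit A.det := by
    refine isUnit_iff_ne_zero.2 fun h => hT.det_pos.ne' ?_
    rw [det_mul, h, mul_zero]
  have hquad : (A *ᵥ δ) ⬝ᵥ (A *ᵥ δ) = d ^ 2 := by
    rw [sq_sqrt hpos.le, ← mulVec_mulVec, dotProduct_mulVec δ, vecMul_transpose]
  obtain ⟨O, hO, hOe⟩ := exists_orthogonal_mulVec_single i₀ (u := d⁻¹ • (A *ᵥ δ)) (by
    rw [smul_dotProduct, dotProduct_smul, hquad, smul_eq_mul, smul_eq_mul]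
    field_simp)
  refine ⟨A⁻¹ * O, ?_, ?_⟩
  · calc (A⁻¹ * O)ᵀ * (Aᵀ * A) * (A⁻¹ * O) = Oᵀ * ((A * A⁻¹)ᵀ * (A * A⁻¹)) * O := by
          simp only [transpose_mul, Matrix.mul_assoc]
      _ = 1 := by rw [mul_nonsing_inv _ hA, transpose_one, one_mul, mul_one, hO]
  · rw [← mulVec_mulVec, ← mul_one d, ← smul_eq_mul, Pi.single_smul', mulVec_smul, hOe, smul_smul,
      mul_inv_cancel₀ hd.ne', one_smul, mulVec_mulVec, nonsing_inv_mul _ hA, one_mulVec]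

theorem integral_comp_mulVec_add {E : Type*} [NormedAddCommGroup E] [NormedSpace ℝ E]
    {B : Matrix ι ι ℝ} (hB : B.det ≠ 0) (g : (ι → ℝ) → E) (a : ι → ℝ) :
    ∫ z, g (B *ᵥ z + a) = |B.det|⁻¹ • ∫ y, g y := by
  let e := ((toLin' B).equivOfDetNeZero (by rwa [LinearMap.det_toLin'])).toContinuousLinearEquiv
    |>.toHomeomorph.toMeasurableEquiv
  have h := integral_map_equiv (μ := volume) e fun y => g (y + a)
  rw [show ⇑e = toLin' B from rfl, Real.map_matrix_volume_pi_eq_smul_volume_pi hB,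
    integral_smul_measure, integral_add_right_eq_self, ENNReal.toReal_ofReal (by positivity),
    abs_inv] at h
  simpa using h.symm

theorem integral_mul_prod_erase (i₀ : ι) (h g : ℝ → ℝ) :
    ∫ z : ι → ℝ, h (z i₀) * ∏ i ∈ Finset.univ.erase i₀, g (z i) =
      (∫ t, h t) * (∫ t, g t) ^ (Fintype.card ι - 1) := by
  set F := Function.update (fun _ : ι => g) i₀ h
  have hF : ∀ i ∈ Finset.univ.erase i₀, F i = g := fun i hi =>
    Function.update_of_ne (Finset.ne_of_mem_erase hi) _ _
  have hprod : ∀ z : ι → ℝ, ∏ i, F i (z i) = h (z i₀) * ∏ i ∈ Finset.univ.erase i₀, g (z i) :=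
    fun z => by
      rw [← Finset.mul_prod_erase _ _ (Finset.mem_univ i₀), Finset.prod_congr rfl fun i hi => by
        rw [hF i hi]]
      simp [F]
  simp_rw [← hprod]
  rw [integral_fintype_prod_volume_eq_prod, ← Finset.mul_prod_erase _ _ (Finset.mem_univ i₀),
    Finset.prod_congr rfl fun i hi => by rw [hF i hi], Finset.prod_const,
    Finset.card_erase_of_mem (Finset.mem_univ _), Finset.card_univ]
  simp [F]

theorem integral_abs_prod_gaussianPDFReal_sub_prod_add_single (i₀ : ι) (d : ℝ) :
    ∫ z : ι → ℝ, |∏ i, gaussianPDFReal 0 1 (z i) -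
        ∏ i, gaussianPDFReal 0 1 ((z + Pi.single i₀ d : ι → ℝ) i)| =
      ∫ t, |gaussianPDFReal 0 1 t - gaussianPDFReal 0 1 (t + d)| := by
  have hfactor : ∀ z : ι → ℝ, |∏ i, gaussianPDFReal 0 1 (z i) -
      ∏ i, gaussianPDFReal 0 1 ((z + Pi.single i₀ d : ι → ℝ) i)| =
        |gaussianPDFReal 0 1 (z i₀) - gaussianPDFReal 0 1 (z i₀ + d)| *
          ∏ i ∈ Finset.univ.erase i₀, gaussianPDFReal 0 1 (z i) := fun z => by
    have hshift : ∏ i, gaussianPDFReal 0 1 ((z + Pi.single i₀ d : ι → ℝ) i) =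
        gaussianPDFReal 0 1 (z i₀ + d) * ∏ i ∈ Finset.univ.erase i₀, gaussianPDFReal 0 1 (z i) := by
      rw [← Finset.mul_prod_erase _ _ (Finset.mem_univ i₀)]
      congr 1
      · simp
      · exact Finset.prod_congr rfl fun i hi => by simp [Finset.ne_of_mem_erase hi]
    rw [hshift, ← Finset.mul_prod_erase _ _ (Finset.mem_univ i₀), ← sub_mul, abs_mul,
      abs_of_nonneg (Finset.prod_nonneg fun i _ => gaussianPDFReal_nonneg 0 1 _)]
  simp_rw [hfactor]
  rw [integral_mul_prod_erase i₀ (fun t => |gaussianPDFReal 0 1 t - gaussianPDFReal 0 1 (t + d)|),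
    integral_gaussianPDFReal_eq_one 0 one_ne_zero, one_pow, mul_one]

/-- The paper's `φ_Σ`: the centered normal density with covariance `S`. -/
noncomputable def multivariateGaussianPDFReal (S : Matrix ι ι ℝ) (x : ι → ℝ) : ℝ :=
  (2 * π) ^ (-(Fintype.card ι : ℝ) / 2) * S.det ^ (-(1 / 2 : ℝ)) * exp (-(x ⬝ᵥ (S⁻¹ *ᵥ x)) / 2)

theorem multivariateGaussianPDFReal_mulVec {S B : Matrix ι ι ℝ} (hB : Bᵀ * S⁻¹ * B = 1)
    (z : ι → ℝ) :
    multivariateGaussianPDFReal S (B *ᵥ z) = (√S.det)⁻¹ * ∏ i, gaussianPDFReal 0 1 (z i) := by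
  have hS : 0 ≤ S.det := det_sq_of_transpose_mul_inv_mul_eq_one hB ▸ sq_nonneg _
  have h2π : (2 * π) ^ (-(Fintype.card ι : ℝ) / 2) = (√(2 * π))⁻¹ ^ Fintype.card ι := by
    rw [sqrt_eq_rpow, ← rpow_neg (by positivity), ← rpow_natCast, ← rpow_mul (by positivity)]
    ring_nf
  have hdet : S.det ^ (-(1 / 2 : ℝ)) = (√S.det)⁻¹ := by
    rw [sqrt_eq_rpow, rpow_neg hS]
  have hexp : exp (-(z ⬝ᵥ z) / 2) = ∏ i, exp (-(z i) ^ 2 / 2) := by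
    rw [← exp_sum, dotProduct, ← Finset.sum_div, ← Finset.sum_neg_distrib]
    simp [sq]
  rw [multivariateGaussianPDFReal, dotProduct_mulVec_mulVec_of_transpose_mul_mul_eq_one hB, h2π,
    hdet, hexp]
  simp only [gaussianPDFReal, Finset.prod_mul_distrib, Finset.prod_const, Finset.card_univ,
    NNReal.coe_one, mul_one, sub_zero]
  ring

theorem integral_abs_multivariateGaussianPDFReal_sub_le {S : Matrix ι ι ℝ} (hS : S.PosDef)
    (μ₁ μ₂ : ι → ℝ) :
    ∫ y, |multivariateGaussianPDFReal S (y - μ₁) - multivariateGaussianPDFReal S (y - μ₂)| ≤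
      √(2 / π) * √((μ₁ - μ₂) ⬝ᵥ (S⁻¹ *ᵥ (μ₁ - μ₂))) := by
  rcases eq_or_ne (μ₁ - μ₂) 0 with hμ | hμ
  · rw [sub_eq_zero.1 hμ]
    simp only [sub_self, abs_zero, integral_zero]
    positivity
  obtain ⟨i₀, -⟩ := Function.ne_iff.1 hμ
  obtain ⟨B, hB, hBδ⟩ := hS.inv.exists_transpose_mul_mul_eq_one_mulVec_single i₀ hμ
  set d := √((μ₁ - μ₂) ⬝ᵥ (S⁻¹ *ᵥ (μ₁ - μ₂)))
  have hdetB : |B.det| = √S.det := by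
    rw [← sqrt_sq_eq_abs, det_sq_of_transpose_mul_inv_mul_eq_one hB]
  have hdetB0 : B.det ≠ 0 := abs_pos.1 (hdetB ▸ sqrt_pos.2 hS.det_pos)
  have hshift : ∀ z, B *ᵥ z + μ₁ - μ₂ = B *ᵥ (z + Pi.single i₀ d) := fun z => by
    rw [mulVec_add, hBδ]
    abel
  calc _ = |B.det| * ∫ z, |multivariateGaussianPDFReal S (B *ᵥ z + μ₁ - μ₁) -
          multivariateGaussianPDFReal S (B *ᵥ z + μ₁ - μ₂)| := by
        rw [integral_comp_mulVec_add hdetB0 (fun y => |multivariateGaussianPDFReal S (y - μ₁) -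
          multivariateGaussianPDFReal S (y - μ₂)|), smul_eq_mul,
          mul_inv_cancel_left₀ (abs_ne_zero.2 hdetB0)]
    _ = ∫ z : ι → ℝ, |∏ i, gaussianPDFReal 0 1 (z i) -
          ∏ i, gaussianPDFReal 0 1 ((z + Pi.single i₀ d : ι → ℝ) i)| := by
        simp_rw [add_sub_cancel_right, hshift, multivariateGaussianPDFReal_mulVec hB, ← mul_sub,
          abs_mul, integral_const_mul, abs_inv, abs_of_nonneg (sqrt_nonneg _), hdetB]
        exact mul_inv_cancel_left₀ (sqrt_pos.2 hS.det_pos).ne' _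
    _ = ∫ t, |gaussianPDFReal 0 1 t - gaussianPDFReal 0 1 (t + d)| :=
        integral_abs_prod_gaussianPDFReal_sub_prod_add_single i₀ d
    _ ≤ √(2 / π) * d := integral_abs_gaussianPDFReal_sub_le (sqrt_nonneg _)

theorem gaussian_L1_distance_bound_general (L : ℕ)
    (μ₁ μ₂ : Fin L → ℝ) (S : Matrix (Fin L) (Fin L) ℝ) (hS : S.PosDef) :
    (∫ y : Fin L → ℝ,
        |(fun x : Fin L → ℝ =>
            (2 * π) ^ (-(L : ℝ) / 2) * S.det ^ (-(1 / 2 : ℝ)) *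
              Real.exp (-(x ⬝ᵥ (S⁻¹ *ᵥ x)) / 2)) (y - μ₁) -
          (fun x : Fin L → ℝ =>
            (2 * π) ^ (-(L : ℝ) / 2) * S.det ^ (-(1 / 2 : ℝ)) *
              Real.exp (-(x ⬝ᵥ (S⁻¹ *ᵥ x)) / 2)) (y - μ₂)|) ≤
      Real.sqrt (2 / π) * Real.sqrt ((μ₁ - μ₂) ⬝ᵥ (S⁻¹ *ᵥ (μ₁ - μ₂))) := by
  have h := integral_abs_multivariateGaussianPDFReal_sub_le hS μ₁ μ₂
  simp only [multivariateGaussianPDFReal, Fintype.card_fin] at h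
  exact h

/-- The L1 distance between two `L`-variate normal densities with common
covariance `Σ` and means `μ₁, μ₂` is at most
`√(2/π) · ((μ₁−μ₂)ᵀ Σ⁻¹ (μ₁−μ₂))^{1/2}`. -/
theorem gaussian_L1_distance_bound (L : ℕ) (hL : 1 ≤ L)
    (μ₁ μ₂ : Fin L → ℝ) (S : Matrix (Fin L) (Fin L) ℝ) (hS : S.PosDef) :
    (∫ y : Fin L → ℝ,
        |(fun x : Fin L → ℝ =>
            (2 * π) ^ (-(L : ℝ) / 2) * S.det ^ (-(1 / 2 : ℝ)) *
              Real.exp (-(x ⬝ᵥ (S⁻¹ *ᵥ x)) / 2)) (y - μ₁) -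
          (fun x : Fin L → ℝ =>
            (2 * π) ^ (-(L : ℝ) / 2) * S.det ^ (-(1 / 2 : ℝ)) *
              Real.exp (-(x ⬝ᵥ (S⁻¹ *ᵥ x)) / 2)) (y - μ₂)|) ≤
      Real.sqrt (2 / π) * Real.sqrt ((μ₁ - μ₂) ⬝ᵥ (S⁻¹ *ᵥ (μ₁ - μ₂))) :=
  gaussian_L1_distance_bound_general L μ₁ μ₂ S hS
end
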